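/- Suppose X and Y are finite generating sets for a group G. For each λ ≥ 1 and c ≥ 0 there exist λ' ≥ λ, c' ≥ c and K > 0 such that PCL_{G,X,λ,c}(n) ≤ K² + K · PCL_{G,Y,λ',c'}(Kn) for all n ∈ ℕ. -/

import Mathlib

/- Common definitions: words over a generating set, word length, geodesic and
quasi-geodesic words, cyclic permutations, PC-conjugators, the (permutation)
conjugacy length functions, hyperbolic Cayley graphs, and relative hyperbolicity. -/

namespace PCLPaper

variable {G : Type*} [Group G]

/-- `w` is a word over the alphabet `X ⊆ G`. -/
def IsWord (X : Set G) (w : List G) : Prop := ∀ x ∈ w, x ∈ X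

/-- `X` generates `G` as a monoid. -/
def Generates (X : Set G) : Prop := ∀ g : G, ∃ w : List G, IsWord X w ∧ w.prod = g

/-- The word length `|g|_X` of `g` with respect to `X`. -/
noncomputable def wlen (X : Set G) (g : G) : ℕ :=
  sInf {n | ∃ w : List G, IsWord X w ∧ w.prod = g ∧ w.length = n}

/-- The word metric `d_X(g,h)`. -/
noncomputable def wdist (X : Set G) (g h : G) : ℕ := wlen X (g⁻¹ * h)

/-- The ball `B_X(r)` of radius `r` about the identity. -/
def ball (X : Set G) (r : ℝ) : Set G := {g : G | (wlen X g : ℝ) ≤ r}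

/-- A geodesic word: its length equals the word length of the element it represents. -/
def IsGeodesicWord (X : Set G) (w : List G) : Prop :=
  IsWord X w ∧ w.length = wlen X w.prod

/-- `u'` is a cyclic permutation of `u`. -/
def IsCyclicPerm (u u' : List G) : Prop := ∃ i : ℕ, u' = u.drop i ++ u.take i

/-- `w` is a PC-conjugator for the words `u, v`: it conjugates a cyclic permutation
of `u` to a cyclic permutation of `v`. -/
def IsPCConjugator (u v : List G) (w : G) : Prop :=
  ∃ u' v' : List G, IsCyclicPerm u u' ∧ IsCyclicPerm v v' ∧
    w * u'.prod = v'.prod * w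

/-- `PCL_{G,X}(u,v)`: the minimal `X`-length of a PC-conjugator of `u` and `v`. -/
noncomputable def PCLpair (X : Set G) (u v : List G) : ℕ :=
  sInf {n | ∃ w : G, IsPCConjugator u v w ∧ wlen X w = n}

/-- The permutation conjugacy length function `PCL_{G,X}(n)`: the maximum of
`PCL_{G,X}(u,v)` over geodesic words `u, v` representing conjugate elements with
`ℓ(u) + ℓ(v) ≤ n`. -/
noncomputable def PCL (X : Set G) (n : ℕ) : ℕ :=
  sSup {k | ∃ u v : List G, IsGeodesicWord X u ∧ IsGeodesicWord X v ∧
    IsConj u.prod v.prod ∧ u.length + v.length ≤ n ∧ PCLpair X u v = k}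

/-- The minimal `X`-length of a conjugator `w` with `w * a = b * w`. -/
noncomputable def CLFpair (X : Set G) (a b : G) : ℕ :=
  sInf {n | ∃ w : G, w * a = b * w ∧ wlen X w = n}

/-- The conjugacy length function `CLF_{G,X}(n)`. -/
noncomputable def CLF (X : Set G) (n : ℕ) : ℕ :=
  sSup {k | ∃ u v : List G, IsWord X u ∧ IsWord X v ∧
    IsConj u.prod v.prod ∧ u.length + v.length ≤ n ∧ CLFpair X u.prod v.prod = k}

/-- A `(λ,c)`-quasi-geodesic word over `S`. -/
def IsQuasiGeodesicWord (S : Set G) (lam c : ℝ) (w : List G) : Prop :=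
  IsWord S w ∧ ∀ i j : ℕ, i ≤ j → j ≤ w.length →
    (j : ℝ) - (i : ℝ) ≤ lam * (wdist S (w.take i).prod (w.take j).prod : ℝ) + c

/-- The vertices of the path in the Cayley graph starting at `g` and labelled by `w`. -/
def pathVertices (g : G) (w : List G) : Set G :=
  {h : G | ∃ i ≤ w.length, h = g * (w.take i).prod}

/-- The Cayley graph `Γ(G,S)` is `δ`-hyperbolic: geodesic triangles are `δ`-slim. -/
def SlimTriangles (S : Set G) (δ : ℝ) : Prop :=
  ∀ (g : G) (p q r : List G), IsGeodesicWord S p → IsGeodesicWord S q →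
    IsGeodesicWord S r → p.prod * q.prod = r.prod →
    ∀ x ∈ pathVertices g p,
      ∃ y ∈ pathVertices (g * p.prod) q ∪ pathVertices g r, (wdist S x y : ℝ) ≤ δ

/-- The relative generating set `S = X ∪ ⋃_ω (H_ω \ {1})`. -/
def relGen {Ω : Type*} (X : Set G) (H : Ω → Subgroup G) : Set G :=
  X ∪ ⋃ ω, ((H ω : Set G) \ {1})

/-- The index pair `(i,j)` describes an `Hω`-component of the word `p`:
a maximal subpath all of whose edge labels lie in `Hω`. -/
def IsComponent (Hω : Subgroup G) (p : List G) (i j : ℕ) : Prop :=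
  i < j ∧ j ≤ p.length ∧ (∀ k, i ≤ k → k < j → p.getD k 1 ∈ Hω) ∧
  (i = 0 ∨ p.getD (i - 1) 1 ∉ Hω) ∧ (j = p.length ∨ p.getD j 1 ∉ Hω)

/-- The `Hω`-components `(i,j)` of the path `(x,p)` and `(k,l)` of the path `(y,q)`
are connected: all their vertices lie in the same left coset of `Hω`. -/
def ConnectedAt (Hω : Subgroup G) (x : G) (p : List G) (i j : ℕ)
    (y : G) (q : List G) (k l : ℕ) : Prop :=
  IsComponent Hω p i j ∧ IsComponent Hω q k l ∧
    (x * (p.take i).prod)⁻¹ * (y * (q.take k).prod) ∈ Hω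

/-- The two components are connected, for some common parabolic subgroup. -/
def ConnectedComponents {Ω : Type*} (H : Ω → Subgroup G) (x : G) (p : List G) (i j : ℕ)
    (y : G) (q : List G) (k l : ℕ) : Prop :=
  ∃ ω, ConnectedAt (H ω) x p i j y q k l

/-- The bounded coset penetration property for the pair `(G, {H_ω})`. -/
def BCP {Ω : Type*} (X : Set G) (H : Ω → Subgroup G) : Prop :=
  ∀ lam : ℝ, 1 ≤ lam → ∃ a : ℝ, 0 < a ∧
    ∀ (g : G) (p q : List G),
      IsQuasiGeodesicWord (relGen X H) lam 0 p →
      IsQuasiGeodesicWord (relGen X H) lam 0 q →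
      (wdist X (g * p.prod) (g * q.prod) : ℝ) ≤ 1 →
      (∀ ω i j, IsComponent (H ω) p i j →
        a ≤ (wdist X (g * (p.take i).prod) (g * (p.take j).prod) : ℝ) →
        ∃ k l, ConnectedAt (H ω) g p i j g q k l) ∧
      (∀ i j k l, ConnectedComponents H g p i j g q k l →
        (wdist X (g * (p.take i).prod) (g * (q.take k).prod) : ℝ) ≤ a ∧
        (wdist X (g * (p.take j).prod) (g * (q.take l).prod) : ℝ) ≤ a)

/-- `G` is hyperbolic relative to the subgroups `{H_ω}`, with respect to the
generating set `X`. -/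
def RelativelyHyperbolic {Ω : Type*} (X : Set G) (H : Ω → Subgroup G) : Prop :=
  (∃ δ : ℝ, 0 ≤ δ ∧ SlimTriangles (relGen X H) δ) ∧ BCP X H

/-- The generating set of a subgroup `K` induced by `X`: the set `X ∩ K`,
viewed inside `K`. -/
def subGen (X : Set G) (K : Subgroup G) : Set K := {h : K | (h : G) ∈ X}

/-- The base vertex of the `a`-th side of a polygon with sides `sides` based at `g`. -/
def sideBase (g : G) (sides : List (List G)) (a : ℕ) : G :=
  g * ((sides.take a).flatten).prod

/-- Side `a` of the polygon is a single component, isolated in the polygon. -/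
def SideIsolated {Ω : Type*} (H : Ω → Subgroup G) (g : G) (sides : List (List G))
    (a : ℕ) : Prop :=
  (∃ ω, IsComponent (H ω) (sides.getD a []) 0 (sides.getD a []).length) ∧
  ∀ b i j, b < sides.length → ¬(b = a ∧ i = 0 ∧ j = (sides.getD a []).length) →
    ¬ ConnectedComponents H (sideBase g sides a) (sides.getD a []) 0
        (sides.getD a []).length (sideBase g sides b) (sides.getD b []) i j

/-- `D` satisfies the conclusion of the polygon lemma: in any closed polygon whose
distinguished sides are isolated components and whose remaining sides are
`(λ,c)`-quasi-geodesics, the total `X`-length of the distinguished sides is at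
most `D · (number of sides)`. -/
def PolygonConst {Ω : Type*} (X : Set G) (H : Ω → Subgroup G) (lam c D : ℝ) : Prop :=
  ∀ (g : G) (sides : List (List G)) (I : Finset ℕ),
    (sides.flatten).prod = 1 →
    (∀ a ∈ I, a < sides.length ∧ SideIsolated H g sides a) →
    (∀ a, a < sides.length → a ∉ I →
      IsQuasiGeodesicWord (relGen X H) lam c (sides.getD a [])) →
    ∑ a ∈ I, (wlen X ((sides.getD a []).prod) : ℝ) ≤ D * sides.length

/-- `v` is derived from `u`: obtained by replacing subwords of `u` whose letters all
lie in a single parabolic subgroup by the single element of `G` they represent. -/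
def IsDerived {Ω : Type*} (X : Set G) (H : Ω → Subgroup G) (u v : List G) : Prop :=
  ∃ blocks : List (List G), blocks.flatten = u ∧ (∀ b ∈ blocks, b ≠ []) ∧
    (∀ b ∈ blocks, b.length = 1 ∨ ∃ ω, IsWord (X ∩ (H ω : Set G)) b) ∧
    v = blocks.map List.prod

/-- No subword of `v` of length greater than one represents a parabolic element. -/
def NoLongParabolicSubword {Ω : Type*} (H : Ω → Subgroup G) (v : List G) : Prop :=
  ∀ w₁ w₂ w₃ : List G, v = w₁ ++ w₂ ++ w₃ → 1 < w₂.length → ∀ ω, w₂.prod ∉ H ω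

/-- The properties of the finite generating set produced by the generating set lemma
(Lemma 5.3 of Antolín–Ciobanu, Lemma 3.3 of the paper). -/
structure GoodGenSet {Ω : Type*} (X : Set G) (H : Ω → Subgroup G) (lam c : ℝ) : Prop where
  finite : X.Finite
  generates : Generates X
  lam_ge : 1 ≤ lam
  c_ge : 0 ≤ c
  par_gen : ∀ ω : Ω, ∀ h ∈ H ω, ∃ w : List G, IsWord (X ∩ (H ω : Set G)) w ∧ w.prod = h
  isom : ∀ ω : Ω, ∀ h ∈ H ω, wlen (X ∩ (H ω : Set G)) h = wlen X h
  geo_par : ∀ ω : Ω, ∀ u : List G, IsGeodesicWord X u → u.prod ∈ H ω →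
    IsWord (X ∩ (H ω : Set G)) u
  derived : ∀ u : List G, IsGeodesicWord X u → ∃ v : List G, IsDerived X H u v ∧
    IsQuasiGeodesicWord (relGen X H) lam c v ∧ NoLongParabolicSubword H v

/-- The growth function: the number of elements in the ball of radius `r`. -/
noncomputable def growth (X : Set G) (r : ℝ) : ℕ := (ball X r).ncard

/-- The conjugacy growth function: the number of conjugacy classes meeting the ball. -/
noncomputable def conjGrowth (X : Set G) (r : ℝ) : ℕ := (ConjClasses.mk '' ball X r).ncard

/-- The exponential growth rate `h_{G,X}`. -/
noncomputable def growthRate (X : Set G) : ℝ :=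
  Filter.limsup (fun n : ℕ => Real.log (growth X n) / n) Filter.atTop

/-- The exponential conjugacy growth rate `k_{G,X}`. -/
noncomputable def conjGrowthRate (X : Set G) : ℝ :=
  Filter.limsup (fun n : ℕ => Real.log (conjGrowth X n) / n) Filter.atTop

/-- `f ⪯ g`: there is `C > 0` with `f(n) ≤ C·g(C·n) + C` for all `n`. -/
def Preceq (f g : ℕ → ℕ) : Prop := ∃ C : ℕ, 0 < C ∧ ∀ n, f n ≤ C * g (C * n) + C

/-- Asymptotic equivalence of functions. -/
def Asymp (f g : ℕ → ℕ) : Prop := Preceq f g ∧ Preceq g f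

/-- A group is finite-by-abelian: it has a finite normal subgroup with abelian
quotient. -/
def FiniteByAbelian (K : Type*) [Group K] : Prop :=
  ∃ N : Subgroup K, N.Normal ∧ Finite N ∧ ∀ a b : K, a * b * a⁻¹ * b⁻¹ ∈ N

/-- The permutation conjugacy length function for `(λ,c)`-quasi-geodesic words. -/
noncomputable def PCLq (X : Set G) (lam c : ℝ) (n : ℕ) : ℕ :=
  sSup {k | ∃ u v : List G, IsQuasiGeodesicWord X lam c u ∧
    IsQuasiGeodesicWord X lam c v ∧ IsConj u.prod v.prod ∧
    u.length + v.length ≤ n ∧ PCLpair X u v = k}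

/-!
Substitute for every letter `x` of an `X`-word a fixed geodesic `Y`-word representing `x`.
By finiteness these blocks have length at most `M`, and every letter of `Y` has `X`-length at
most `M'`. Every prefix of the substituted word `ū` lies within `Y`-distance `M` of the image of
a prefix of `u`, both just before and just after it. Hence `ū` is a quasi-geodesic with
constants depending only on `λ, c, M, M'`, and a PC-conjugator of `ū, v̄`, which may permute
cyclically in the middle of a block, can be moved to block boundaries at the cost of two
words of `Y`-length at most `M`; this gives a PC-conjugator of `u, v` of `X`-length at most
`M'` times its `Y`-length plus `2MM'`.
-/

section ExistsIndex

variable {s : ℕ → ℕ} {M : ℕ}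

theorem exists_index_le_of_step_le (h0 : s 0 = 0) (hs : ∀ a, s (a + 1) ≤ s a + M) {i : ℕ} :
    ∀ {n}, i ≤ s n → ∃ a ≤ n, s a ≤ i ∧ i ≤ s a + M
  | 0, hi => ⟨0, le_rfl, by omega, by omega⟩
  | n + 1, hi => by
    by_cases hin : i ≤ s n
    · obtain ⟨a, han, ha⟩ := exists_index_le_of_step_le h0 hs hin
      exact ⟨a, han.trans n.le_succ, ha⟩
    · exact ⟨n, n.le_succ, by omega, by linarith [hs n]⟩

theorem exists_index_ge_of_step_le (h0 : s 0 = 0) (hs : ∀ a, s (a + 1) ≤ s a + M) {i : ℕ} :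
    ∀ {n}, i ≤ s n → ∃ b ≤ n, i ≤ s b ∧ s b ≤ i + M
  | 0, hi => ⟨0, le_rfl, hi, by omega⟩
  | n + 1, hi => by
    by_cases hin : i ≤ s n
    · obtain ⟨b, hbn, hb⟩ := exists_index_ge_of_step_le h0 hs hin
      exact ⟨b, hbn.trans n.le_succ, hb⟩
    · exact ⟨n + 1, le_rfl, hi, by linarith [hs n]⟩

end ExistsIndex

section WordLength

variable {X Y : Set G}

theorem wlen_le_length {w : List G} (hw : IsWord X w) : wlen X w.prod ≤ w.length :=
  Nat.sInf_le ⟨w, hw, rfl, rfl⟩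

theorem exists_isWord_length_eq_wlen (hX : Generates X) (g : G) :
    ∃ w : List G, IsWord X w ∧ w.prod = g ∧ w.length = wlen X g := by
  obtain ⟨w, hw, rfl⟩ := hX g
  exact Nat.sInf_mem (s := {n | ∃ v : List G, IsWord X v ∧ v.prod = w.prod ∧ v.length = n})
    ⟨w.length, w, hw, rfl, rfl⟩

theorem wlen_mul_le (hX : Generates X) (g h : G) : wlen X (g * h) ≤ wlen X g + wlen X h := by
  obtain ⟨u, hu, rfl, hul⟩ := exists_isWord_length_eq_wlen hX g
  obtain ⟨v, hv, rfl, hvl⟩ := exists_isWord_length_eq_wlen hX h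
  simpa [hul, hvl] using wlen_le_length (X := X) (w := u ++ v)
    fun x hx => (List.mem_append.1 hx).elim (hu x) (hv x)

theorem wdist_triangle (hX : Generates X) (g h k : G) :
    wdist X g k ≤ wdist X g h + wdist X h k := by
  simpa [wdist, mul_assoc] using wlen_mul_le hX (g⁻¹ * h) (h⁻¹ * k)

theorem wdist_take_take_le {w : List G} (hw : IsWord X w) {p q : ℕ} (hpq : p ≤ q) :
    wdist X (w.take p).prod (w.take q).prod ≤ q - p := by
  have hsplit : (w.take q).prod = (w.take p).prod * ((w.drop p).take (q - p)).prod := by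
    rw [← List.prod_append, ← List.take_add, Nat.add_sub_cancel' hpq]
  rw [wdist, hsplit, inv_mul_cancel_left]
  refine (wlen_le_length fun x hx => hw x ?_).trans (by simp)
  exact List.mem_of_mem_drop (List.mem_of_mem_take hx)

theorem wlen_prod_le_mul_length (hX : Generates X) {M : ℕ} (hM : ∀ y ∈ Y, wlen X y ≤ M) :
    ∀ {w : List G}, IsWord Y w → wlen X w.prod ≤ M * w.length
  | [], _ => by simpa using wlen_le_length (X := X) (w := []) (by simp [IsWord])
  | y :: w, hw => by
    have hy := hM y (hw y List.mem_cons_self)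
    have ih := wlen_prod_le_mul_length hX hM fun x hx => hw x (List.mem_cons_of_mem y hx)
    calc wlen X (y :: w).prod ≤ wlen X y + wlen X w.prod := by
          simpa using wlen_mul_le hX y w.prod
      _ ≤ M * (y :: w).length := by simp only [List.length_cons]; linarith

theorem wlen_le_mul_wlen (hX : Generates X) (hY : Generates Y) {M : ℕ}
    (hM : ∀ y ∈ Y, wlen X y ≤ M) (g : G) : wlen X g ≤ M * wlen Y g := by
  obtain ⟨w, hw, rfl, hwl⟩ := exists_isWord_length_eq_wlen hY g
  simpa [hwl] using wlen_prod_le_mul_length hX hM hw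

theorem exists_pos_forall_wlen_le (hX : X.Finite) (Y : Set G) :
    ∃ M, 0 < M ∧ ∀ x ∈ X, wlen Y x ≤ M := by
  obtain ⟨M, hM⟩ := (hX.image (wlen Y)).bddAbove
  exact ⟨M + 1, M.succ_pos, fun x hx => (hM ⟨x, hx, rfl⟩).trans M.le_succ⟩

end WordLength

theorem semiconjBy_conj_conj_iff {w g h p q : G} :
    SemiconjBy w (p⁻¹ * g * p) (q⁻¹ * h * q) ↔ SemiconjBy (q * w * p⁻¹) g h := by
  simp only [SemiconjBy]
  constructor <;> intro H
  · calc q * w * p⁻¹ * g = q * (w * (p⁻¹ * g * p)) * p⁻¹ := by group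
      _ = q * (q⁻¹ * h * q * w) * p⁻¹ := by rw [H]
      _ = h * (q * w * p⁻¹) := by group
  · calc w * (p⁻¹ * g * p) = q⁻¹ * (q * w * p⁻¹ * g) * p := by group
      _ = q⁻¹ * (h * (q * w * p⁻¹)) * p := by rw [H]
      _ = q⁻¹ * h * q * w := by group

theorem prod_drop_append_take (l : List G) (i : ℕ) :
    (l.drop i ++ l.take i).prod = (l.take i).prod⁻¹ * l.prod * (l.take i).prod := by
  have hsplit : l.prod = (l.take i).prod * (l.drop i).prod := by
    rw [← List.prod_append, List.take_append_drop]
  rw [List.prod_append, hsplit]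
  group

theorem isCyclicPerm_iff {α : Type*} {u u' : List α} :
    IsCyclicPerm u u' ↔ ∃ i ≤ u.length, u' = u.drop i ++ u.take i := by
  refine ⟨fun ⟨i, hi⟩ => ?_, fun ⟨i, _, hi⟩ => ⟨i, hi⟩⟩
  rcases le_total i u.length with h | h
  · exact ⟨i, h, hi⟩
  · exact ⟨u.length, le_rfl, by simp [hi, List.take_of_length_le h, List.drop_eq_nil_of_le h]⟩

/-- Permuting `u` cyclically at position `i` conjugates `u.prod` by its prefix of length `i`. -/
theorem isPCConjugator_iff {u v : List G} {w : G} :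
    IsPCConjugator u v w ↔ ∃ i ≤ u.length, ∃ k ≤ v.length,
      SemiconjBy ((v.take k).prod * w * (u.take i).prod⁻¹) u.prod v.prod := by
  simp only [IsPCConjugator, isCyclicPerm_iff, ← semiconjBy_conj_conj_iff]
  constructor
  · rintro ⟨_, _, ⟨i, hi, rfl⟩, ⟨k, hk, rfl⟩, H⟩
    exact ⟨i, hi, k, hk, by rwa [← prod_drop_append_take, ← prod_drop_append_take]⟩
  · rintro ⟨i, hi, k, hk, H⟩
    exact ⟨_, _, ⟨i, hi, rfl⟩, ⟨k, hk, rfl⟩, by rwa [prod_drop_append_take, prod_drop_append_take]⟩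

theorem isPCConjugator_of_semiconjBy {u v : List G} {w : G} (h : SemiconjBy w u.prod v.prod) :
    IsPCConjugator u v w :=
  isPCConjugator_iff.2 ⟨0, by simp, 0, by simp, by simpa using h⟩

theorem PCLpair_le_wlen {X : Set G} {u v : List G} {w : G} (hw : IsPCConjugator u v w) :
    PCLpair X u v ≤ wlen X w :=
  Nat.sInf_le ⟨w, hw, rfl⟩

theorem exists_isPCConjugator_wlen_eq_PCLpair (X : Set G) {u v : List G}
    (h : IsConj u.prod v.prod) : ∃ w, IsPCConjugator u v w ∧ wlen X w = PCLpair X u v := by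
  obtain ⟨g, hg⟩ := isConj_iff.1 h
  have hsc : SemiconjBy g u.prod v.prod := by rw [← hg]; exact SemiconjBy.conj_mk g u.prod
  exact Nat.sInf_mem (s := {n | ∃ w, IsPCConjugator u v w ∧ wlen X w = n})
    ⟨_, g, isPCConjugator_of_semiconjBy hsc, rfl⟩

theorem finite_setOf_isWord_length_le {α : Type*} {Y : Set α} (hY : Y.Finite) (n : ℕ) :
    {w : List α | IsWord Y w ∧ w.length ≤ n}.Finite := by
  have : Finite Y := hY.to_subtype
  refine ((List.finite_length_le Y n).image (List.map Subtype.val)).subset ?_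
  rintro w ⟨hw, hwn⟩
  exact ⟨w.attach.map fun x => ⟨x.1, hw x.1 x.2⟩, by simpa using hwn, by simp⟩

theorem PCLpair_le_PCLq {Y : Set G} (hY : Y.Finite) {lam c : ℝ} {u v : List G} {n : ℕ}
    (hu : IsQuasiGeodesicWord Y lam c u) (hv : IsQuasiGeodesicWord Y lam c v)
    (h : IsConj u.prod v.prod) (hn : u.length + v.length ≤ n) :
    PCLpair Y u v ≤ PCLq Y lam c n := by
  refine le_csSup (Set.Finite.bddAbove ?_) ⟨u, v, hu, hv, h, hn, rfl⟩
  have hwords := finite_setOf_isWord_length_le hY n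
  refine ((hwords.prod hwords).image fun p => PCLpair Y p.1 p.2).subset ?_
  rintro _ ⟨u', v', hu', hv', -, hn', rfl⟩
  exact ⟨(u', v'), ⟨⟨hu'.1, show u'.length ≤ n by omega⟩, hv'.1, show v'.length ≤ n by omega⟩, rfl⟩

section Substitution

variable {α β : Type*} (rep : α → List β)

def blockStart (u : List α) (a : ℕ) : ℕ := ((u.take a).flatMap rep).length

variable {rep} {u : List α} {M : ℕ}

theorem blockStart_zero : blockStart rep u 0 = 0 := by simp [blockStart]

theorem blockStart_length : blockStart rep u u.length = (u.flatMap rep).length := by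
  simp [blockStart]

theorem take_blockStart (a : ℕ) :
    (u.flatMap rep).take (blockStart rep u a) = (u.take a).flatMap rep := by
  have hsplit : u.flatMap rep = (u.take a).flatMap rep ++ (u.drop a).flatMap rep := by
    rw [← List.flatMap_append, List.take_append_drop]
  rw [hsplit]
  exact List.take_left' rfl

theorem blockStart_add (a d : ℕ) : blockStart rep u (a + d) =
    blockStart rep u a + (((u.drop a).take d).flatMap rep).length := by
  simp only [blockStart, List.take_add, List.flatMap_append, List.length_append]

theorem length_flatMap_le (hM : ∀ x ∈ u, (rep x).length ≤ M) :
    (u.flatMap rep).length ≤ M * u.length := by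
  rw [List.length_flatMap]
  simpa [mul_comm] using
    List.sum_le_card_nsmul (u.map fun x => (rep x).length) M (by simpa using hM)

theorem blockStart_mono : Monotone (blockStart rep u) := by
  intro a b hab
  obtain ⟨d, rfl⟩ := Nat.exists_eq_add_of_le hab
  simp [blockStart_add]

theorem blockStart_add_le (hM : ∀ x ∈ u, (rep x).length ≤ M) (a d : ℕ) :
    blockStart rep u (a + d) ≤ blockStart rep u a + M * d := by
  rw [blockStart_add]
  refine Nat.add_le_add_left ((length_flatMap_le fun x hx => hM x ?_).trans ?_) _
  · exact List.mem_of_mem_drop (List.mem_of_mem_take hx)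
  · exact Nat.mul_le_mul_left M (by simp)

theorem isWord_flatMap {Y : Set β} (hrepY : ∀ x, IsWord Y (rep x)) (u : List α) :
    IsWord Y (u.flatMap rep) := by
  intro y hy
  obtain ⟨x, -, hyx⟩ := List.mem_flatMap.1 hy
  exact hrepY x y hyx

end Substitution

section SubstitutionInGroup

variable {X Y : Set G} {rep : G → List G} {u v : List G} {M M' : ℕ}

theorem prod_flatMap (hrep : ∀ g, (rep g).prod = g) (u : List G) :
    (u.flatMap rep).prod = u.prod := by
  simp [List.prod_flatten, List.flatMap, hrep, Function.comp_def]

theorem prod_take_blockStart (hrep : ∀ g, (rep g).prod = g) (a : ℕ) :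
    ((u.flatMap rep).take (blockStart rep u a)).prod = (u.take a).prod := by
  rw [take_blockStart, prod_flatMap hrep]

theorem exists_blockStart_le_wdist_le (hrepY : ∀ g, IsWord Y (rep g))
    (hrep : ∀ g, (rep g).prod = g) (hM : ∀ x ∈ u, (rep x).length ≤ M) {i : ℕ}
    (hi : i ≤ (u.flatMap rep).length) :
    ∃ a ≤ u.length, blockStart rep u a ≤ i ∧
      wdist Y (u.take a).prod ((u.flatMap rep).take i).prod ≤ M := by
  rw [← blockStart_length] at hi
  obtain ⟨a, hau, hai, hia⟩ :=
    exists_index_le_of_step_le blockStart_zero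
      (fun a => by simpa using blockStart_add_le hM a 1) hi
  refine ⟨a, hau, hai, ?_⟩
  rw [← prod_take_blockStart hrep a]
  exact (wdist_take_take_le (isWord_flatMap hrepY u) hai).trans (by omega)

theorem exists_le_blockStart_wdist_le (hrepY : ∀ g, IsWord Y (rep g))
    (hrep : ∀ g, (rep g).prod = g) (hM : ∀ x ∈ u, (rep x).length ≤ M) {i : ℕ}
    (hi : i ≤ (u.flatMap rep).length) :
    ∃ b ≤ u.length, i ≤ blockStart rep u b ∧
      wdist Y ((u.flatMap rep).take i).prod (u.take b).prod ≤ M := by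
  rw [← blockStart_length] at hi
  obtain ⟨b, hbu, hib, hbi⟩ :=
    exists_index_ge_of_step_le blockStart_zero
      (fun a => by simpa using blockStart_add_le hM a 1) hi
  refine ⟨b, hbu, hib, ?_⟩
  rw [← prod_take_blockStart hrep b]
  exact (wdist_take_take_le (isWord_flatMap hrepY u) hib).trans (by omega)

theorem IsQuasiGeodesicWord.flatMap (hX : Generates X) (hY : Generates Y)
    (hrepY : ∀ g, IsWord Y (rep g)) (hrep : ∀ g, (rep g).prod = g)
    (hM : ∀ x ∈ u, (rep x).length ≤ M) (hM' : ∀ y ∈ Y, wlen X y ≤ M') {lam c : ℝ}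
    (hlam : 0 ≤ lam) (hc : 0 ≤ c) (hu : IsQuasiGeodesicWord X lam c u) :
    IsQuasiGeodesicWord Y (M * M' * lam) (M * c + 2 * M ^ 2 * M' * lam) (u.flatMap rep) := by
  refine ⟨isWord_flatMap hrepY u, fun i j hij hj => ?_⟩
  obtain ⟨a, -, hai, hda⟩ := exists_blockStart_le_wdist_le hrepY hrep hM (hij.trans hj)
  obtain ⟨b, hbu, hjb, hdb⟩ := exists_le_blockStart_wdist_le hrepY hrep hM hj
  set d := wdist Y ((u.flatMap rep).take i).prod ((u.flatMap rep).take j).prod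
  rcases lt_or_ge b a with hba | hab
  · have hji : (j : ℝ) ≤ i := by exact_mod_cast hjb.trans ((blockStart_mono hba.le).trans hai)
    have : 0 ≤ (M * M' * lam : ℝ) * d + (M * c + 2 * M ^ 2 * M' * lam) := by positivity
    linarith
  obtain ⟨e, rfl⟩ := Nat.exists_eq_add_of_le hab
  have hji : j ≤ i + M * e := by have := blockStart_add_le hM a e; omega
  have hdist : wdist X (u.take a).prod (u.take (a + e)).prod ≤ M' * (M + d + M) := by
    refine (wlen_le_mul_wlen hX hY hM' _).trans (Nat.mul_le_mul_left M' ?_)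
    calc wdist Y (u.take a).prod (u.take (a + e)).prod
        ≤ wdist Y (u.take a).prod ((u.flatMap rep).take i).prod
          + wdist Y ((u.flatMap rep).take i).prod ((u.flatMap rep).take j).prod
          + wdist Y ((u.flatMap rep).take j).prod (u.take (a + e)).prod :=
          (wdist_triangle hY _ _ _).trans (Nat.add_le_add_right (wdist_triangle hY _ _ _) _)
      _ ≤ M + d + M := by gcongr
  have hqg := hu.2 a (a + e) (by omega) hbu
  push_cast at hqg
  calc (j : ℝ) - i ≤ M * e := by linarith [(show (j : ℝ) ≤ i + M * e by exact_mod_cast hji)]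
    _ ≤ M * (lam * wdist X (u.take a).prod (u.take (a + e)).prod + c) := by gcongr; linarith
    _ ≤ M * (lam * (M' * (M + d + M)) + c) := by gcongr; exact_mod_cast hdist
    _ = M * M' * lam * d + (M * c + 2 * M ^ 2 * M' * lam) := by ring

theorem IsPCConjugator.exists_of_flatMap (hX : Generates X) (hY : Generates Y)
    (hrepY : ∀ g, IsWord Y (rep g)) (hrep : ∀ g, (rep g).prod = g)
    (hMu : ∀ x ∈ u, (rep x).length ≤ M) (hMv : ∀ x ∈ v, (rep x).length ≤ M)
    (hM' : ∀ y ∈ Y, wlen X y ≤ M') {w : G}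
    (hw : IsPCConjugator (u.flatMap rep) (v.flatMap rep) w) :
    ∃ w', IsPCConjugator u v w' ∧ wlen X w' ≤ M' * wlen Y w + 2 * M * M' := by
  obtain ⟨i, hi, k, hk, hsc⟩ := isPCConjugator_iff.1 hw
  rw [prod_flatMap hrep, prod_flatMap hrep] at hsc
  -- `i` is rounded up and `k` down, so that both correcting factors are read forwards along
  -- a word: `X` and `Y` generate only as monoids, and `wlen` need not be inverse-invariant.
  obtain ⟨b, hbu, -, hdb⟩ := exists_le_blockStart_wdist_le hrepY hrep hMu hi
  obtain ⟨a, hav, -, hda⟩ := exists_blockStart_le_wdist_le hrepY hrep hMv hk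
  set p := ((u.flatMap rep).take i).prod
  set q := ((v.flatMap rep).take k).prod
  refine ⟨(v.take a).prod⁻¹ * q * w * (p⁻¹ * (u.take b).prod),
    isPCConjugator_iff.2 ⟨b, hbu, a, hav, ?_⟩, ?_⟩
  · convert hsc using 1
    group
  have hqa : wlen X ((v.take a).prod⁻¹ * q) ≤ M' * M :=
    (wlen_le_mul_wlen hX hY hM' _).trans (Nat.mul_le_mul_left M' hda)
  have hpb : wlen X (p⁻¹ * (u.take b).prod) ≤ M' * M :=
    (wlen_le_mul_wlen hX hY hM' _).trans (Nat.mul_le_mul_left M' hdb)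
  calc wlen X ((v.take a).prod⁻¹ * q * w * (p⁻¹ * (u.take b).prod))
      ≤ wlen X ((v.take a).prod⁻¹ * q) + wlen X w + wlen X (p⁻¹ * (u.take b).prod) :=
        (wlen_mul_le hX _ _).trans (Nat.add_le_add_right (wlen_mul_le hX _ _) _)
    _ ≤ M' * M + M' * wlen Y w + M' * M := by
        gcongr
        exact wlen_le_mul_wlen hX hY hM' w
    _ = M' * wlen Y w + 2 * M * M' := by ring

theorem PCLpair_le_of_flatMap (hX : Generates X) (hY : Generates Y)
    (hrepY : ∀ g, IsWord Y (rep g)) (hrep : ∀ g, (rep g).prod = g)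
    (hMu : ∀ x ∈ u, (rep x).length ≤ M) (hMv : ∀ x ∈ v, (rep x).length ≤ M)
    (hM' : ∀ y ∈ Y, wlen X y ≤ M')
    (h : IsConj u.prod v.prod) :
    PCLpair X u v ≤ M' * PCLpair Y (u.flatMap rep) (v.flatMap rep) + 2 * M * M' := by
  rw [← prod_flatMap hrep u, ← prod_flatMap hrep v] at h
  obtain ⟨w, hw, hwY⟩ := exists_isPCConjugator_wlen_eq_PCLpair Y h
  obtain ⟨w', hw', hw'X⟩ := hw.exists_of_flatMap hX hY hrepY hrep hMu hMv hM'
  rw [← hwY]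
  exact (PCLpair_le_wlen hw').trans hw'X

theorem PCLpair_le_PCLq_of_flatMap (hX : Generates X) (hY : Generates Y) (hYf : Y.Finite)
    (hrepY : ∀ g, IsWord Y (rep g)) (hrep : ∀ g, (rep g).prod = g)
    (hMu : ∀ x ∈ u, (rep x).length ≤ M) (hMv : ∀ x ∈ v, (rep x).length ≤ M)
    (hM' : ∀ y ∈ Y, wlen X y ≤ M') {lam c : ℝ} (hlam : 0 ≤ lam) (hc : 0 ≤ c)
    (hu : IsQuasiGeodesicWord X lam c u) (hv : IsQuasiGeodesicWord X lam c v)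
    (h : IsConj u.prod v.prod) {N : ℕ} (hN : M * (u.length + v.length) ≤ N) :
    PCLpair X u v ≤
      M' * PCLq Y (M * M' * lam) (M * c + 2 * M ^ 2 * M' * lam) N + 2 * M * M' := by
  have hlen : (u.flatMap rep).length + (v.flatMap rep).length ≤ N := by
    nlinarith [length_flatMap_le hMu, length_flatMap_le hMv]
  have hPCLq := PCLpair_le_PCLq hYf (hu.flatMap hX hY hrepY hrep hMu hM' hlam hc)
    (hv.flatMap hX hY hrepY hrep hMv hM' hlam hc)
    (by rwa [prod_flatMap hrep, prod_flatMap hrep]) hlen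
  calc PCLpair X u v ≤ M' * PCLpair Y (u.flatMap rep) (v.flatMap rep) + 2 * M * M' :=
        PCLpair_le_of_flatMap hX hY hrepY hrep hMu hMv hM' h
    _ ≤ _ := by gcongr

end SubstitutionInGroup

/-- **Lemma (change of generating set).** If `X` and `Y` are finite generating sets
of `G`, then for every `λ ≥ 1` and `c ≥ 0` there are `λ' ≥ λ`, `c' ≥ c` and `K > 0`
with `PCL_{G,X,λ,c}(n) ≤ K² + K · PCL_{G,Y,λ',c'}(K·n)` for all `n`. -/
theorem pclq_change_gen_set
    (X Y : Set G) (hXf : X.Finite) (hXg : Generates X)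
    (hYf : Y.Finite) (hYg : Generates Y)
    (lam c : ℝ) (hlam : 1 ≤ lam) (hc : 0 ≤ c) :
    ∃ lam' c' : ℝ, lam ≤ lam' ∧ c ≤ c' ∧ ∃ K : ℕ, 0 < K ∧
      ∀ n : ℕ, PCLq X lam c n ≤ K ^ 2 + K * PCLq Y lam' c' (K * n) := by
  obtain ⟨M, hM, hXY⟩ := exists_pos_forall_wlen_le hXf Y
  obtain ⟨M', hM', hYX⟩ := exists_pos_forall_wlen_le hYf X
  choose rep hrepY hrep hrepLen using exists_isWord_length_eq_wlen hYg
  have hM1 : (1 : ℝ) ≤ M := by exact_mod_cast hM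
  have hM'1 : (1 : ℝ) ≤ M' := by exact_mod_cast hM'
  have hMM' : (1 : ℝ) ≤ M * M' := one_le_mul_of_one_le_of_one_le hM1 hM'1
  refine ⟨M * M' * lam, M * c + 2 * M ^ 2 * M' * lam, by nlinarith,
    by nlinarith [show 0 ≤ (M : ℝ) ^ 2 * M' * lam by positivity], 2 * M * M', by positivity,
    fun n => csSup_le' ?_⟩
  rintro _ ⟨u, v, hu, hv, hconj, hn, rfl⟩
  have hMu : ∀ x ∈ u, (rep x).length ≤ M := fun x hx => (hrepLen x).trans_le (hXY x (hu.1 x hx))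
  have hMv : ∀ x ∈ v, (rep x).length ≤ M := fun x hx => (hrepLen x).trans_le (hXY x (hv.1 x hx))
  have hK : M' ≤ 2 * M * M' := by nlinarith
  have hN : M * (u.length + v.length) ≤ 2 * M * M' * n :=
    (Nat.mul_le_mul_left M hn).trans (Nat.mul_le_mul_right n (by nlinarith))
  have hbound := PCLpair_le_PCLq_of_flatMap hXg hYg hYf hrepY hrep hMu hMv hYX (by linarith) hc
    hu hv hconj hN
  generalize PCLq Y _ _ _ = Q at hbound ⊢
  nlinarith [Nat.mul_le_mul_right Q hK, Nat.le_self_pow two_ne_zero (2 * M * M')]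

end PCLPaper
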